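/- Let G be a chordal graph and K a complete subgraph of G with K ≠ G. Then there exists a vertex x of G not in K such that the subgraph of G induced on the neighbor set N(x) of x is a complete subgraph; consequently the induced subgraph on N(x) ∪ {x} is complete. -/

import Mathlib

open MvPolynomial

section Defs

variable (k : Type*) [Field k] (σ : Type*)

/-- A set of vertices is a vertex cover if it meets every edge. -/
def SimpleGraph.IsVertexCover' {V : Type*} (G : SimpleGraph V) (S : Set V) : Prop :=
  ∀ ⦃x y : V⦄, G.Adj x y → x ∈ S ∨ y ∈ S

/-- A minimal vertex cover: a vertex cover no proper subset of which is a cover. -/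
def SimpleGraph.IsMinimalVertexCover {V : Type*} (G : SimpleGraph V) (S : Set V) : Prop :=
  G.IsVertexCover' S ∧ ∀ T ⊆ S, G.IsVertexCover' T → T = S

/-- A graph is chordal if every cycle of length `> 3` has a chord. -/
def SimpleGraph.IsChordal {V : Type*} (G : SimpleGraph V) : Prop :=
  ∀ ⦃v : V⦄ (w : G.Walk v v), w.IsCycle → 3 < w.length →
    ∃ x y : V, x ∈ w.support ∧ y ∈ w.support ∧ G.Adj x y ∧ s(x, y) ∉ w.edges

/-- Delete a set of vertices (keep the same vertex type, remove all incident edges). -/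
def SimpleGraph.deleteVerts' {V : Type*} (G : SimpleGraph V) (S : Set V) : SimpleGraph V where
  Adj a b := G.Adj a b ∧ a ∉ S ∧ b ∉ S
  symm := ⟨fun a b h => ⟨h.1.symm, h.2.2, h.2.1⟩⟩
  loopless := ⟨fun a h => G.loopless.irrefl a h.1⟩

/-- The edge ideal of a graph. -/
noncomputable def edgeIdeal {V : Type*} (G : SimpleGraph V) : Ideal (MvPolynomial V k) :=
  Ideal.span {m | ∃ i j : V, G.Adj i j ∧ m = X i * X j}

/-- The squarefree Alexander dual of the edge ideal:
the intersection of the primes `(x_i, x_j)` over the edges of `G`. -/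
noncomputable def alexanderDual {V : Type*} (G : SimpleGraph V) : Ideal (MvPolynomial V k) :=
  ⨅ (i : V) (j : V) (_ : G.Adj i j), Ideal.span {X i, X j}

/-- `I_[d]`: the ideal generated by the squarefree monomials of degree `d` lying in `I`. -/
noncomputable def sqfreeComponent {V : Type*} (I : Ideal (MvPolynomial V k)) (d : ℕ) :
    Ideal (MvPolynomial V k) :=
  Ideal.span {m | ∃ S : Finset V, S.card = d ∧ (∏ i ∈ S, X i) ∈ I ∧ m = ∏ i ∈ S, (X i : MvPolynomial V k)}

/-- `(I_d)`: the ideal generated by the homogeneous degree-`d` elements of `I`. -/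
noncomputable def degreeComponent {V : Type*} (I : Ideal (MvPolynomial V k)) (d : ℕ) :
    Ideal (MvPolynomial V k) :=
  Ideal.span ((I : Set (MvPolynomial V k)) ∩ (homogeneousSubmodule V k d : Set (MvPolynomial V k)))

/-- `I` has a linear resolution in degree `d`: there is a (necessarily minimal) graded free
resolution of `I` whose `i`-th free module is generated in degree `d + i`; equivalently all the
matrix entries of the differentials are homogeneous of degree `1`, so that
`β_{i,j}(I) = 0` for `j ≠ i + d`. -/
def HasLinearResolution {V : Type*} (d : ℕ) (I : Ideal (MvPolynomial V k)) : Prop :=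
  ∃ (b : ℕ → ℕ)
    (g : (Fin (b 0) →₀ MvPolynomial V k) →ₗ[MvPolynomial V k] MvPolynomial V k)
    (f : ∀ i : ℕ, (Fin (b (i+1)) →₀ MvPolynomial V k) →ₗ[MvPolynomial V k]
        (Fin (b i) →₀ MvPolynomial V k)),
    (∀ j, g (Finsupp.single j 1) ∈ homogeneousSubmodule V k d) ∧
    LinearMap.range g = I ∧
    (∀ i j l, (f i (Finsupp.single j 1)) l ∈ homogeneousSubmodule V k 1) ∧
    LinearMap.ker g = LinearMap.range (f 0) ∧
    (∀ i, LinearMap.ker (f i) = LinearMap.range (f (i+1)))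

/-- A homogeneous ideal is componentwise linear if each `(I_d)` has a linear resolution. -/
def ComponentwiseLinear {V : Type*} (I : Ideal (MvPolynomial V k)) : Prop :=
  ∀ d : ℕ, HasLinearResolution k d (degreeComponent k I d)

/-- A monomial ideal has linear quotients if its minimal generators can be listed with
nondecreasing degrees so that each successive colon ideal is generated by variables. -/
def HasLinearQuotients {V : Type*} (I : Ideal (MvPolynomial V k)) : Prop :=
  ∃ (m : ℕ) (u : Fin m → MvPolynomial V k),
    (∀ i, ∃ s : V →₀ ℕ, u i = monomial s (1 : k)) ∧
    I = Ideal.span (Set.range u) ∧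
    (∀ i j : Fin m, i ≤ j → (u i).totalDegree ≤ (u j).totalDegree) ∧
    (∀ i : Fin m, 0 < (i : ℕ) →
      ∃ s : Set V,
        Submodule.colon (Ideal.span (u '' {j | j < i})) (Ideal.span {u i})
          = Ideal.span (MvPolynomial.X '' s))

/-- The irrelevant (graded) maximal ideal of the polynomial ring. -/
noncomputable def maxIdeal : Ideal (MvPolynomial σ k) :=
  Ideal.span (Set.range (X : σ → MvPolynomial σ k))

/-- `rs` is an `M`-regular sequence: each term is a nonzerodivisor modulo the previous ones,
and the sequence does not generate everything. -/
def IsRegularSeq (R M : Type*) [CommRing R] [AddCommGroup M] [Module R M]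
    (rs : List R) : Prop :=
  (∀ (i : ℕ) (h : i < rs.length) (x : M),
      rs.get ⟨i, h⟩ • x ∈ (Ideal.span {r | r ∈ rs.take i}) • (⊤ : Submodule R M) →
        x ∈ (Ideal.span {r | r ∈ rs.take i}) • (⊤ : Submodule R M)) ∧
  (Ideal.span {r | r ∈ rs}) • (⊤ : Submodule R M) ≠ ⊤

/-- The depth of `M` with respect to the ideal `m`: the supremum of the lengths of
`M`-regular sequences with entries in `m`. -/
noncomputable def moduleDepth (R M : Type*) [CommRing R] [AddCommGroup M] [Module R M]
    (m : Ideal R) : ℕ :=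
  sSup {d : ℕ | ∃ rs : List R, rs.length = d ∧ (∀ r ∈ rs, r ∈ m) ∧ IsRegularSeq R M rs}

/-- The Krull dimension of a module: the dimension of `R` modulo the annihilator. -/
noncomputable def moduleDim (R M : Type*) [CommRing R] [AddCommGroup M] [Module R M] :
    WithBot (WithTop ℕ) :=
  ringKrullDim (R ⧸ Module.annihilator R M)

/-- `M` is a (nonzero) Cohen-Macaulay module: depth equals Krull dimension. -/
def IsCMModule (R M : Type*) [CommRing R] [AddCommGroup M] [Module R M] (m : Ideal R) : Prop :=
  Nontrivial M ∧ (moduleDepth R M m : WithBot (WithTop ℕ)) = moduleDim R M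

/-- `R/I` is Cohen-Macaulay. -/
def QuotientIsCM {V : Type*} (I : Ideal (MvPolynomial V k)) : Prop :=
  (moduleDepth (MvPolynomial V k) (MvPolynomial V k ⧸ I) (maxIdeal k V) : WithBot (WithTop ℕ))
    = ringKrullDim (MvPolynomial V k ⧸ I)

/-- `R/I` is sequentially Cohen-Macaulay: there is a filtration
`0 = M₀ ⊂ M₁ ⊂ ⋯ ⊂ M_r = R/I` whose successive quotients are Cohen-Macaulay of strictly
increasing Krull dimension. -/
def SequentiallyCM {V : Type*} (I : Ideal (MvPolynomial V k)) : Prop :=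
  ∃ (r : ℕ) (N : Fin (r+1) → Submodule (MvPolynomial V k) (MvPolynomial V k ⧸ I)),
    Monotone N ∧ N 0 = ⊥ ∧ N (Fin.last r) = ⊤ ∧
    (∀ i : Fin r,
      IsCMModule (MvPolynomial V k)
        (N i.succ ⧸ Submodule.comap (N i.succ).subtype (N i.castSucc)) (maxIdeal k V)) ∧
    StrictMono (fun i : Fin r =>
      moduleDim (MvPolynomial V k)
        (N i.succ ⧸ Submodule.comap (N i.succ).subtype (N i.castSucc)))

/-- `I` is a squarefree monomial ideal. -/
def IsSquarefreeMonomialIdeal {V : Type*} (I : Ideal (MvPolynomial V k)) : Prop :=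
  ∃ F : Set (Finset V), I = Ideal.span {m | ∃ S ∈ F, m = ∏ i ∈ S, (X i : MvPolynomial V k)}

/-- `I` is unmixed: all its minimal primes have the same height (equivalently, here,
the same codimension/coheight). -/
def IsUnmixed {R : Type*} [CommRing R] (I : Ideal R) : Prop :=
  ∀ P ∈ I.minimalPrimes, ∀ Q ∈ I.minimalPrimes,
    ringKrullDim (R ⧸ P) = ringKrullDim (R ⧸ Q)

/-- The cycle graph on `ZMod n`. -/
def cycleGraph (n : ℕ) : SimpleGraph (ZMod n) :=
  SimpleGraph.fromEdgeSet {e | ∃ i : ZMod n, e = s(i, i + 1)}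

end Defs

/-! Dirac's argument, run inside a vertex set `t` by induction on `t`. If some vertex `u` of the
clique `K` is adjacent to all of `t`, delete it. Otherwise choose `u ∈ t` whose closed
neighbourhood contains `K` but not all of `t`, a component `C` of what `t` has outside that
neighbourhood, and the set `S` of neighbours of `u` adjacent to `C`. Chordality makes `S` a
clique, so induction on `C ∪ S ⊂ t` gives a vertex of `C`, hence outside `K`, whose
neighbourhood lies in `C ∪ S` and is a clique. -/

namespace SimpleGraph

open Set Walk

variable {V : Type*} {G : SimpleGraph V}

/-- `G.induce s`, kept on the vertex type `V`. -/
def restrict (G : SimpleGraph V) (s : Set V) : SimpleGraph V where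
  Adj a b := G.Adj a b ∧ a ∈ s ∧ b ∈ s
  symm := ⟨fun _ _ h => ⟨h.1.symm, h.2.2, h.2.1⟩⟩
  loopless := ⟨fun a h => G.loopless.irrefl a h.1⟩

theorem restrict_le (s : Set V) : G.restrict s ≤ G := fun _ _ h => h.1

theorem restrict_mono {s s' : Set V} (h : s ⊆ s') : G.restrict s ≤ G.restrict s' :=
  fun _ _ hab => ⟨hab.1, h hab.2.1, h hab.2.2⟩

namespace Walk

theorem mem_of_mem_support_restrict {s : Set V} {a b v : V} (p : (G.restrict s).Walk a b)
    (ha : a ∈ s) (hv : v ∈ p.support) : v ∈ s := by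
  induction p with
  | nil => simp_all
  | cons h p ih =>
    rw [support_cons, List.mem_cons] at hv
    exact hv.elim (· ▸ ha) (ih h.2.2)

theorem isChordless_of_length_eq_dist {u v : V} (p : G.Walk u v) (hp : p.length = G.dist u v) :
    p.IsChordless := by
  classical
  rw [isChordless_iff_forall_mem_edges]
  induction p with
  | nil => simp_all
  | @cons u w v h q ih =>
    have hq : q.length = G.dist w v := by
      obtain ⟨r, hr⟩ := q.reachable.exists_walk_length_eq_dist
      have := dist_le (cons h r)
      have := dist_le q
      simp only [length_cons] at *
      omega
    -- a neighbour `y` of `u` further along `q` would give a shortcut unless `y = w`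
    have head : ∀ y ∈ q.support, G.Adj u y → s(u, y) ∈ (cons h q).edges := by
      intro y hy huy
      have := dist_le (cons huy (q.dropUntil y hy))
      have : q.length = (q.takeUntil y hy).length + (q.dropUntil y hy).length := by
        rw [← length_append, take_spec]
      simp only [length_cons] at *
      obtain rfl : w = y := (q.takeUntil y hy).eq_of_length_eq_zero (by omega)
      simp
    intro x y hx hy hxy
    rw [support_cons, List.mem_cons] at hx hy
    rcases hx with rfl | hx <;> rcases hy with rfl | hy
    · exact absurd hxy (G.loopless.irrefl _)
    · exact head y hy hxy
    · exact Sym2.eq_swap ▸ head x hx hxy.symm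
    · exact List.mem_cons_of_mem _ (ih hq hx hy hxy)

end Walk

/-- Otherwise a shortest `s`–`s'` path through `R`, closed up through `u`, would be a chordless
cycle of length at least four. -/
theorem IsChordal.adj_of_reachable_restrict (hG : G.IsChordal) {u s s' : V} {R : Set V}
    (hs : G.Adj u s) (hs' : G.Adj u s') (hne : s ≠ s') (huR : u ∉ R)
    (hR : ∀ r ∈ R, ¬G.Adj u r)
    (hreach : (G.restrict (insert s (insert s' R))).Reachable s s') :
    G.Adj s s' := by
  by_contra hnadj
  set D := insert s (insert s' R)
  obtain ⟨p, hp⟩ := hreach.exists_walk_length_eq_dist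
  have hlen : 1 < p.length :=
    hp ▸ hreach.one_lt_dist_of_ne_of_not_adj hne fun h => hnadj h.1
  have hpD : ∀ v ∈ p.support, v ∈ D := fun v => p.mem_of_mem_support_restrict (by simp [D])
  have hup : u ∉ p.support := fun h => by
    simpa [D, hs.ne, hs'.ne, huR] using hpD u h
  have hadj_u : ∀ v ∈ p.support, G.Adj u v → v = s ∨ v = s' := fun v hv huv => by
    simpa [D, hR v |>.mt (not_not_intro huv)] using hpD v hv
  let c : G.Walk u u := cons hs ((p.mapLe (restrict_le D)).concat hs'.symm)
  have hc : c.IsCycle := by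
    refine (cons_isCycle_iff _ _).2 ⟨?_, ?_⟩
    · exact ((p.isPath_of_length_eq_dist hp).mapLe (restrict_le D)).concat
        (by rwa [support_mapLe_eq_support]) _
    · simp only [edges_concat, edges_mapLe_eq_edges, List.concat_eq_append, List.mem_append,
        List.mem_singleton, Sym2.eq_swap, not_or]
      exact ⟨fun h => hup (p.fst_mem_support_of_mem_edges h), by simp [hne, hs'.ne]⟩
  obtain ⟨x, y, hx, hy, hxy, hnot⟩ := hG c hc (by simp [c]; omega)
  have hmem : ∀ v ∈ c.support, v = u ∨ v ∈ p.support := fun v hv => by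
    simp only [c, support_cons, support_concat, support_mapLe_eq_support, List.mem_cons,
      List.mem_append] at hv
    tauto
  rcases hmem x hx with rfl | hxp <;> rcases hmem y hy with rfl | hyp
  · exact G.loopless.irrefl _ hxy
  · rcases hadj_u y hyp hxy with rfl | rfl <;> simp [c] at hnot
  · rcases hadj_u x hxp hxy.symm with rfl | rfl <;> simp [c] at hnot
  · have hchord := p.isChordless_of_length_eq_dist hp
    exact hnot (by simp [c, hchord.mem_edges hxp hyp ⟨hxy, hpD x hxp, hpD y hyp⟩])

/-- Separation step of Dirac's argument: with `C` the component of `w` in `t` minus the closed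
neighbourhood of `u`, and `S` the neighbours of `u` adjacent to `C`, take `t' = C ∪ S`. -/
theorem IsChordal.exists_ssubset_of_not_adj (hG : G.IsChordal) {t : Set V} {u w : V}
    (hu : u ∈ t) (hw : w ∈ t) (hwu : w ≠ u) (huw : ¬G.Adj u w) :
    ∃ t' ⊂ t, ∃ S ⊂ t', G.IsClique S ∧
      ∀ x ∈ t' \ S, x ≠ u ∧ ¬G.Adj u x ∧ G.neighborSet x ∩ t ⊆ t' := by
  set R := {v | v ∈ t ∧ v ≠ u ∧ ¬G.Adj u v}
  set C := {v | v ∈ R ∧ (G.restrict R).Reachable w v}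
  set S := {s | s ∈ t ∧ G.Adj u s ∧ ∃ c ∈ C, G.Adj s c}
  have hwC : w ∈ C := ⟨⟨hw, hwu, huw⟩, .refl w⟩
  have huCS : u ∉ C ∪ S := by
    rintro (h | h)
    exacts [h.1.2.1 rfl, G.loopless.irrefl u h.2.1]
  have hCSt : C ∪ S ⊂ t :=
    ssubset_iff_exists.2 ⟨union_subset (fun v hv => hv.1.1) (fun v hv => hv.1), u, hu, huCS⟩
  have hSCS : S ⊂ C ∪ S :=
    ssubset_iff_exists.2 ⟨subset_union_right, w, .inl hwC, fun h => huw h.2.1⟩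
  refine ⟨C ∪ S, hCSt, S, hSCS, ?_, ?_⟩
  · rintro s ⟨-, hus, c, hc, hsc⟩ s' ⟨-, hus', c', hc', hsc'⟩ hne
    refine hG.adj_of_reachable_restrict (R := R) hus hus' hne (fun h => h.2.1 rfl)
      (fun r hr => hr.2.2) ?_
    have hcc' : (G.restrict R).Reachable c c' := hc.2.symm.trans hc'.2
    refine (Adj.reachable ?_).trans ((hcc'.mono (restrict_mono ?_)).trans (Adj.reachable ?_))
    · exact ⟨hsc, by simp, by simp [hc.1]⟩
    · exact subset_insert _ _ |>.trans (subset_insert _ _)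
    · exact ⟨hsc'.symm, by simp [hc'.1], by simp⟩
  · rintro x ⟨hxC | hxS, hxS'⟩
    · refine ⟨hxC.1.2.1, hxC.1.2.2, fun y ⟨hxy, hy⟩ => ?_⟩
      by_cases huy : G.Adj u y
      · exact .inr ⟨hy, huy, x, hxC, hxy.symm⟩
      · have hyR : y ∈ R := ⟨hy, fun h => hxC.1.2.2 (h ▸ hxy.symm), huy⟩
        exact .inl ⟨hyR, hxC.2.trans (Adj.reachable ⟨hxy, hxC.1, hyR⟩)⟩
    · exact absurd hxS hxS'

theorem IsChordal.exists_isClique_neighborSet_inter [Finite V] (hG : G.IsChordal)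
    {t K : Set V} (hKt : K ⊂ t) (hK : G.IsClique K) :
    ∃ x ∈ t, x ∉ K ∧ G.IsClique (G.neighborSet x ∩ t) := by
  induction t using WellFoundedLT.induction generalizing K with
  | _ t ih =>
  by_cases huniv : ∃ u ∈ K, ∀ v ∈ t, v ≠ u → G.Adj u v
  · obtain ⟨u, huK, hu⟩ := huniv
    obtain ⟨x₀, hx₀t, hx₀K⟩ := exists_of_ssubset hKt
    have hKu : K \ {u} ⊂ t \ {u} := ssubset_iff_exists.2 ⟨sdiff_subset_sdiff_left hKt.subset,
      x₀, ⟨hx₀t, fun h => hx₀K (h ▸ huK)⟩, fun h => hx₀K h.1⟩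
    obtain ⟨x, ⟨hxt, hxu⟩, hxK, hx⟩ :=
      ih (t \ {u}) (sdiff_singleton_ssubset.2 (hKt.subset huK)) hKu (hK.subset sdiff_subset)
    refine ⟨x, hxt, fun h => hxK ⟨h, hxu⟩, ?_⟩
    refine (hx.insert fun b hb hub => hu b hb.2.1 hub.symm).subset fun y ⟨hxy, hy⟩ => ?_
    exact (eq_or_ne y u).imp id fun hyu => ⟨hxy, hy, hyu⟩
  by_cases hclique : G.IsClique t
  · obtain ⟨x, hxt, hxK⟩ := exists_of_ssubset hKt
    exact ⟨x, hxt, hxK, hclique.subset inter_subset_right⟩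
  obtain ⟨u, hu, w, hw, hwu, huw, hKu⟩ : ∃ u ∈ t, ∃ w ∈ t, w ≠ u ∧ ¬G.Adj u w ∧
      K ⊆ insert u (G.neighborSet u) := by
    rcases K.eq_empty_or_nonempty with rfl | ⟨u, huK⟩
    · simp only [IsClique, Set.Pairwise, not_forall] at hclique
      obtain ⟨a, ha, b, hb, hab, hnadj⟩ := hclique
      exact ⟨a, ha, b, hb, Ne.symm hab, hnadj, empty_subset _⟩
    · push Not at huniv
      obtain ⟨w, hw, hwu, huw⟩ := huniv u huK
      refine ⟨u, hKt.subset huK, w, hw, hwu, huw, fun k hk => ?_⟩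
      exact (eq_or_ne k u).imp id fun hku => hK huK hk hku.symm
  obtain ⟨t', ht', S, hS, hSclq, hout⟩ := hG.exists_ssubset_of_not_adj hu hw hwu huw
  obtain ⟨x, hxt', hxS, hx⟩ := ih t' ht' hS hSclq
  obtain ⟨hxu, hux, hxt⟩ := hout x ⟨hxt', hxS⟩
  refine ⟨x, ht'.subset hxt', fun hxK => (hKu hxK).elim hxu hux, ?_⟩
  exact hx.subset (subset_inter inter_subset_left hxt)

end SimpleGraph

/-- In a chordal graph, for any proper complete subgraph `K` there is a vertex
outside `K` whose neighborhood is a clique; hence its closed neighborhood is a clique. -/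
theorem chordal_exists_simplicial_vertex {V : Type*} [Fintype V] (G : SimpleGraph V)
    (hG : G.IsChordal) (K : Set V) (hK : G.IsClique K) (hKne : K ≠ Set.univ) :
    ∃ x : V, x ∉ K ∧ G.IsClique (G.neighborSet x) ∧
      G.IsClique (insert x (G.neighborSet x)) := by
  obtain ⟨x, -, hxK, hx⟩ :=
    hG.exists_isClique_neighborSet_inter (Set.ssubset_univ_iff.2 hKne) hK
  rw [Set.inter_univ] at hx
  exact ⟨x, hxK, hx, hx.insert fun _ hb _ => hb⟩
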